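/- Let H = {h_1,...,h_m} be homogeneous polynomials in R' = K[x_1,...,x_n,y] such that R'/⟨H, y⟩ is Artinian with D := d_reg(⟨H^top⟩) < ∞, where H^top = H|_{y=0}, and such that D' := the generalized degree of regularity of ⟨H⟩ is finite. If D' ≥ D, then every element of the reduced Gröbner basis of ⟨H⟩ with respect to any homogenized graded monomial ordering ≺' has degree at most D'. -/

import Mathlib

open MvPolynomial

namespace GBPaper

/-- The dimension of the degree-`d` homogeneous piece of `R/I`,
where `R = K[x_i : i ∈ σ]`. -/
noncomputable def hilbertFn (K : Type*) [Field K] {σ : Type*}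
    (I : Ideal (MvPolynomial σ K)) (d : ℕ) : ℕ :=
  Module.finrank K
    ((MvPolynomial.homogeneousSubmodule σ K d).map
      (Ideal.Quotient.mkₐ K I).toLinearMap)

/-- An ideal is homogeneous iff it contains all homogeneous components of its elements. -/
def IsHomogeneousIdeal {K : Type*} [Field K] {σ : Type*}
    (I : Ideal (MvPolynomial σ K)) : Prop :=
  ∀ f ∈ I, ∀ d : ℕ, MvPolynomial.homogeneousComponent d f ∈ I

/-- The degree of regularity: the least `d` with `R_d = I_d`. -/
noncomputable def degReg (K : Type*) [Field K] {σ : Type*}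
    (I : Ideal (MvPolynomial σ K)) : ℕ :=
  sInf {d : ℕ | ∀ f : MvPolynomial σ K, f.IsHomogeneous d → f ∈ I}

/-- The generalized degree of regularity: the least `d₀` from which on the Hilbert
function of `R/I` is constant. -/
noncomputable def gdegReg (K : Type*) [Field K] {σ : Type*}
    (I : Ideal (MvPolynomial σ K)) : ℕ :=
  sInf {d₀ : ℕ | ∀ d : ℕ, d₀ ≤ d → hilbertFn K I d = hilbertFn K I d₀}

/-- The leading monomial (leading exponent) of a polynomial with respect to a
monomial order. -/
noncomputable def lm {K : Type*} [Field K] {σ : Type*} (m : MonomialOrder σ)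
    (f : MvPolynomial σ K) : σ →₀ ℕ :=
  m.toSyn.symm (f.support.sup fun s => m.toSyn s)

/-- A monomial order is graded (degree-compatible) if it refines total degree. -/
def MonIsGraded {σ : Type*} (m : MonomialOrder σ) : Prop :=
  ∀ a b : σ →₀ ℕ, a.degree < b.degree → m.toSyn a < m.toSyn b

/-- `G` is the reduced Gröbner basis of `I` with respect to the monomial order `m`. -/
structure IsReducedGB {K : Type*} [Field K] {σ : Type*} (m : MonomialOrder σ)
    (I : Ideal (MvPolynomial σ K)) (G : Finset (MvPolynomial σ K)) : Prop where
  subset : (G : Set (MvPolynomial σ K)) ⊆ I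
  zero_not_mem : (0 : MvPolynomial σ K) ∉ G
  monic : ∀ g ∈ G, MvPolynomial.coeff (lm m g) g = 1
  isGB : ∀ f ∈ I, f ≠ 0 → ∃ g ∈ G, lm m g ≤ lm m f
  reduced : ∀ g ∈ G, ∀ g' ∈ G, g ≠ g' → ∀ s ∈ g.support, ¬ lm m g' ≤ s

/-- The degree reverse lexicographic order with `x_0 ≻ x_1 ≻ ⋯`. -/
def IsDegRevLex {n : ℕ} (m : MonomialOrder (Fin n)) : Prop :=
  ∀ a b : Fin n →₀ ℕ, m.toSyn a < m.toSyn b ↔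
    (a.degree < b.degree ∨
      (a.degree = b.degree ∧ ∃ i, b i < a i ∧ ∀ j, i < j → a j = b j))

/-- Restriction of an exponent vector on `n+1` variables to the first `n` variables. -/
noncomputable def restr {n : ℕ} (a : Fin (n + 1) →₀ ℕ) : Fin n →₀ ℕ :=
  Finsupp.equivFunOnFinite.symm fun i => a i.castSucc

/-- Extension of an exponent vector on `n` variables to `n+1` variables (with
`y`-exponent `0`). -/
noncomputable def extX {n : ℕ} (a : Fin n →₀ ℕ) : Fin (n + 1) →₀ ℕ :=
  Finsupp.embDomain Fin.castSuccEmb a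

/-- `m'` is the homogenization (w.r.t. the last variable `y`) of the graded
monomial order `m₀`: it compares first total degrees, then the `X`-parts using `m₀`. -/
def IsHomogenizationOrder {n : ℕ} (m' : MonomialOrder (Fin (n + 1)))
    (m₀ : MonomialOrder (Fin n)) : Prop :=
  ∀ a b : Fin (n + 1) →₀ ℕ, m'.toSyn a < m'.toSyn b ↔
    (a.degree < b.degree ∨
      (a.degree = b.degree ∧ m₀.toSyn (restr a) < m₀.toSyn (restr b)))

/-- The top part (maximal total degree part) of a polynomial. -/
noncomputable def topPart {K : Type*} [Field K] {σ : Type*}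
    (f : MvPolynomial σ K) : MvPolynomial σ K :=
  MvPolynomial.homogeneousComponent f.totalDegree f

/-- The homogenization of `f ∈ K[x_1,…,x_n]` by the extra (last) variable `y`. -/
noncomputable def homog {K : Type*} [Field K] {n : ℕ}
    (f : MvPolynomial (Fin n) K) : MvPolynomial (Fin (n + 1)) K :=
  ∑ s ∈ f.support,
    MvPolynomial.monomial
      (extX s + Finsupp.single (Fin.last n) (f.totalDegree - s.degree))
      (f.coeff s)

/-- The last variable `y` used for homogenization. -/
noncomputable def yvar (K : Type*) [Field K] (n : ℕ) : MvPolynomial (Fin (n + 1)) K :=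
  MvPolynomial.X (Fin.last n)

/-- Substituting `y = 0`, the "top part" of a homogeneous polynomial in `R[y]`. -/
noncomputable def setYZero {K : Type*} [Field K] {n : ℕ}
    (g : MvPolynomial (Fin (n + 1)) K) : MvPolynomial (Fin (n + 1)) K :=
  MvPolynomial.aeval
    (fun i => if i = Fin.last n then 0 else MvPolynomial.X i) g

/-- The ideal generated by the polynomials `f j` for `j < i`. -/
noncomputable def prevIdeal {K : Type*} [Field K] {σ : Type*} {M : ℕ}
    (f : Fin M → MvPolynomial σ K) (i : Fin M) : Ideal (MvPolynomial σ K) :=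
  Ideal.span (f '' {j | j < i})

/-- `d`-regularity of a sequence of homogeneous polynomials of degrees `dg`. -/
def IsDRegularSeq {K : Type*} [Field K] {σ : Type*} {M : ℕ}
    (f : Fin M → MvPolynomial σ K) (dg : Fin M → ℕ) (d : ℕ) : Prop :=
  ∀ i : Fin M, ∀ g : MvPolynomial σ K, ∀ e : ℕ,
    g.IsHomogeneous e → e + dg i < d →
    g * f i ∈ prevIdeal f i → g ∈ prevIdeal f i

/-- Semi-regularity (Pardue): each multiplication map on graded pieces of the
successive quotients is injective or surjective. -/
def IsSemiRegularSeq {K : Type*} [Field K] {σ : Type*} {M : ℕ}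
    (f : Fin M → MvPolynomial σ K) (dg : Fin M → ℕ) : Prop :=
  ∀ i : Fin M, ∀ t : ℕ, dg i ≤ t →
    (∀ g : MvPolynomial σ K, g.IsHomogeneous (t - dg i) →
        g * f i ∈ prevIdeal f i → g ∈ prevIdeal f i) ∨
    (∀ h : MvPolynomial σ K, h.IsHomogeneous t →
        ∃ g : MvPolynomial σ K, g.IsHomogeneous (t - dg i) ∧
          h - g * f i ∈ prevIdeal f i)

/-- The power series `∏ (1 - z^{d_i}) / (1-z)^n` over `ℤ`. -/
noncomputable def semiRegSeries (n : ℕ) {M : ℕ} (dg : Fin M → ℕ) : PowerSeries ℤ :=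
  (∏ i : Fin M, (1 - (PowerSeries.X : PowerSeries ℤ) ^ dg i)) *
    ((PowerSeries.invOneSubPow ℤ n : (PowerSeries ℤ)ˣ) : PowerSeries ℤ)

/-- The cutoff of the truncation `[·]`: the first index with a nonpositive coefficient. -/
noncomputable def truncCutoff (P : PowerSeries ℤ) : ℕ :=
  sInf {t : ℕ | PowerSeries.coeff t P ≤ 0}

/-- The coefficient of `z^t` in the series `[P]` obtained by truncating `P` after
the last consecutive positive coefficient. -/
noncomputable def truncCoeff (P : PowerSeries ℤ) (t : ℕ) : ℤ :=
  if t < truncCutoff P then PowerSeries.coeff t P else 0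

section Koszul

variable {K : Type*} [Field K] {σ : Type*} {M : ℕ}

/-- Index set of the degree-`i` part of the Koszul complex on `M` polynomials. -/
abbrev KIdx (M i : ℕ) := {s : Finset (Fin M) // s.card = i}

/-- The Koszul differential `K_{i+1} → K_i` of the Koszul complex on `f`. -/
noncomputable def koszulD (f : Fin M → MvPolynomial σ K) (i : ℕ)
    (v : KIdx M (i + 1) → MvPolynomial σ K) :
    KIdx M i → MvPolynomial σ K :=
  fun t => ∑ j : Fin M,
    if h : j ∈ t.val then 0
    else ((-1 : MvPolynomial σ K) ^ (t.val.filter (fun l => l < j)).card) * f j *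
      v ⟨insert j t.val, by rw [Finset.card_insert_of_notMem h, t.prop]⟩

/-- A Koszul `i`-chain is homogeneous of (internal) degree `d`: each component at a
subset `s` is homogeneous of degree `d - ∑_{j ∈ s} dg j` (and zero if `d` is smaller
than this shift). -/
def KChainHom (dg : Fin M → ℕ) (i : ℕ)
    (v : KIdx M i → MvPolynomial σ K) (d : ℕ) : Prop :=
  ∀ t : KIdx M i,
    (v t).IsHomogeneous (d - ∑ j ∈ t.val, dg j) ∧
    (d < ∑ j ∈ t.val, dg j → v t = 0)

/-- A Koszul `i`-cycle: an `i`-chain killed by the Koszul differential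
(every `0`-chain is a cycle). -/
def IsKCycle (f : Fin M → MvPolynomial σ K) :
    (i : ℕ) → (KIdx M i → MvPolynomial σ K) → Prop
  | 0, _ => True
  | (i + 1), v => koszulD f i v = 0

/-- The degree-`d` part of the `i`-th Koszul homology of `f` vanishes:
every homogeneous cycle of degree `d` is a boundary. -/
def KoszulHVanish (f : Fin M → MvPolynomial σ K) (dg : Fin M → ℕ)
    (i d : ℕ) : Prop :=
  ∀ v : KIdx M i → MvPolynomial σ K, KChainHom dg i v d → IsKCycle f i v →
    ∃ w : KIdx M (i + 1) → MvPolynomial σ K, koszulD f i w = v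

/-- The sum `∑ v_j f_j` of which syzygies are the kernel. -/
noncomputable def syzSum (f v : Fin M → MvPolynomial σ K) : MvPolynomial σ K :=
  ∑ j : Fin M, v j * f j

/-- The module of trivial (Koszul) syzygies of `f`. -/
noncomputable def trivSyz (f : Fin M → MvPolynomial σ K) :
    Submodule (MvPolynomial σ K) (Fin M → MvPolynomial σ K) :=
  Submodule.span (MvPolynomial σ K)
    {w | ∃ i j : Fin M, i < j ∧ w = Pi.single j (f i) - Pi.single i (f j)}

/-- A tuple `v` is homogeneous of degree `e` as an element of `⊕ R(-dg j)`. -/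
def TupleHom (dg : Fin M → ℕ) (v : Fin M → MvPolynomial σ K) (e : ℕ) : Prop :=
  ∀ j : Fin M, (v j).IsHomogeneous (e - dg j) ∧ (e < dg j → v j = 0)

end Koszul

end GBPaper

namespace GBPaper

/-- The top part `h|_{y=0}` of a homogeneous polynomial in `R' = R[y]`,
viewed as an element of `R = K[x_1,…,x_n]`. -/
noncomputable def topPartR {K : Type*} [Field K] {n : ℕ}
    (g : MvPolynomial (Fin (n + 1)) K) : MvPolynomial (Fin n) K :=
  MvPolynomial.aeval (Fin.lastCases 0 fun i => MvPolynomial.X i) g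

end GBPaper

/-!
Let `g` be a basis element of degree `d > D'` and `f` its top-degree form, whose leading
monomial `u` occurs in `g`; it suffices to find a leading monomial of `I` of degree `< d`
dividing `u`. If `y ∣ u`, then `y` divides every term of `f` (a homogenized order prefers
`y`-free monomials of the same degree), so `f = y q`. Multiplication by `y` maps
`(R'/I)_{d-1}` onto `(R'/I)_d`, since a form of degree `≥ D` agrees with a multiple of `y`
modulo `I` as its `y`-free part lies in `I^top`; the two spaces have the same dimension, so
the map is injective and `q ∈ I`. If `y ∤ u`, write `u = x_i x^b`: then `x^b ∈ (I^top)_{d-1}`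
lifts to a form of `I` whose leading monomial is `x^b`, its only `y`-free term.
-/

namespace GBPaper

variable {K : Type*} [Field K]

attribute [local instance] MvPolynomial.gradedAlgebra

section Homogeneous

variable {σ : Type*}

theorem lm_eq_degree (m : MonomialOrder σ) (f : MvPolynomial σ K) : lm m f = m.degree f := rfl

theorem isHomogeneous_iff_degree_eq {f : MvPolynomial σ K} {d : ℕ} :
    f.IsHomogeneous d ↔ ∀ s ∈ f.support, s.degree = d := by
  simp only [IsHomogeneous, IsWeightedHomogeneous, Finsupp.degree_eq_weight_one, mem_support_iff]
  rfl

theorem _root_.MvPolynomial.IsHomogeneous.divMonomial {f : MvPolynomial σ K} {d : ℕ}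
    (hf : f.IsHomogeneous d) (s : σ →₀ ℕ) :
    (f.divMonomial s).IsHomogeneous (d - s.degree) := by
  rw [isHomogeneous_iff_degree_eq] at hf ⊢
  intro t ht
  have := hf (s + t) (by simpa using ht)
  rw [map_add] at this
  omega

theorem X_mul_divMonomial_single_eq {f : MvPolynomial σ K} {i : σ}
    (hf : ∀ s ∈ f.support, s i ≠ 0) : X i * f.divMonomial (Finsupp.single i 1) = f := by
  conv_rhs => rw [← divMonomial_add_modMonomial_single f i]
  rw [left_eq_add]
  ext s
  by_cases hs : Finsupp.single i 1 ≤ s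
  · exact coeff_modMonomial_of_le f hs
  · rw [coeff_modMonomial_of_not_le f hs, coeff_zero, ← notMem_support_iff]
    rw [Finsupp.single_le_iff, Nat.one_le_iff_ne_zero] at hs
    exact fun hmem => hs (hf s hmem)

theorem forall_isHomogeneous_mem_of_le {I : Ideal (MvPolynomial σ K)} {e d : ℕ}
    (he : ∀ p : MvPolynomial σ K, p.IsHomogeneous e → p ∈ I) (hed : e ≤ d) :
    ∀ p : MvPolynomial σ K, p.IsHomogeneous d → p ∈ I := by
  induction d, hed using Nat.le_induction with
  | base => exact he
  | succ d _ ih =>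
    intro p hp
    rw [p.as_sum]
    refine Ideal.sum_mem _ fun u hu => ?_
    have hdeg : u.degree = d + 1 := isHomogeneous_iff_degree_eq.mp hp u hu
    obtain ⟨i, hi⟩ : ∃ i, u i ≠ 0 := by
      by_contra! h0
      rw [show u = 0 from Finsupp.ext h0, map_zero] at hdeg
      omega
    have hle : Finsupp.single i 1 ≤ u := Finsupp.single_le_iff.mpr (Nat.one_le_iff_ne_zero.mpr hi)
    have hsplit : monomial u (coeff u p) = X i * monomial (u - Finsupp.single i 1) (coeff u p) := by
      rw [X, monomial_mul, one_mul, add_tsub_cancel_of_le hle]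
    rw [hsplit]
    refine I.mul_mem_left _ (ih _ (isHomogeneous_monomial _ ?_))
    have := congrArg Finsupp.degree (add_tsub_cancel_of_le hle)
    rw [map_add, Finsupp.degree_single] at this
    omega

theorem isHomogeneous_span_range {ι : Type*} {h : ι → MvPolynomial σ K} {dg : ι → ℕ}
    (hhom : ∀ i, (h i).IsHomogeneous (dg i)) :
    (Ideal.span (Set.range h)).IsHomogeneous (homogeneousSubmodule σ K) :=
  Ideal.homogeneous_span _ _ (by rintro _ ⟨i, rfl⟩; exact ⟨dg i, hhom i⟩)

end Homogeneous

section HilbertFunction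

variable {σ : Type*} [Finite σ]

theorem mem_of_X_mul_mem_of_hilbertFn_eq {I : Ideal (MvPolynomial σ K)} (i : σ) {d : ℕ}
    (hHF : hilbertFn K I d = hilbertFn K I (d + 1))
    (hsurj : ∀ f : MvPolynomial σ K, f.IsHomogeneous (d + 1) →
      ∃ q : MvPolynomial σ K, q.IsHomogeneous d ∧ f - X i * q ∈ I)
    {q : MvPolynomial σ K} (hq : q.IsHomogeneous d) (hXq : X i * q ∈ I) : q ∈ I := by
  set π := (Ideal.Quotient.mkₐ K I).toLinearMap
  set V : ℕ → Submodule K (MvPolynomial σ K ⧸ I) :=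
    fun e => (homogeneousSubmodule σ K e).map π
  have hfin : ∀ e, FiniteDimensional K (V e) := fun e =>
    Module.Finite.iff_fg.mpr ((homogeneousSubmodule_fg σ K e).map π)
  have hmaps : ∀ x ∈ V d, Ideal.Quotient.mk I (X i) * x ∈ V (d + 1) := by
    rintro _ ⟨p, hp, rfl⟩
    exact ⟨X i * p, by simpa [add_comm] using (isHomogeneous_X K i).mul hp, by simp [π]⟩
  set L := (LinearMap.mulLeft K (Ideal.Quotient.mk I (X i))).restrict hmaps
  have hLsurj : Function.Surjective L := by
    rintro ⟨_, p, hp, rfl⟩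
    obtain ⟨q, hq, hpq⟩ := hsurj p hp
    refine ⟨⟨π q, q, hq, rfl⟩, Subtype.ext ?_⟩
    change Ideal.Quotient.mk I (X i) * Ideal.Quotient.mk I q = Ideal.Quotient.mk I p
    rw [← map_mul, eq_comm, Ideal.Quotient.eq]
    exact hpq
  have hLinj : Function.Injective L :=
    (LinearMap.injective_iff_surjective_of_finrank_eq_finrank hHF).mpr hLsurj
  have hLq : L ⟨π q, q, hq, rfl⟩ = 0 := by
    refine Subtype.ext ?_
    change Ideal.Quotient.mk I (X i) * Ideal.Quotient.mk I q = 0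
    rwa [← map_mul, Ideal.Quotient.eq_zero_iff_mem]
  have hπq : π q = 0 := congrArg Subtype.val (hLinj (hLq.trans L.map_zero.symm))
  exact Ideal.Quotient.eq_zero_iff_mem.mp hπq

end HilbertFunction

section ReducedGroebnerBasis

variable {σ : Type*} {m : MonomialOrder σ} {I : Ideal (MvPolynomial σ K)}
  {G : Finset (MvPolynomial σ K)}

theorem IsReducedGB.totalDegree_le (hG : IsReducedGB m I G)
    (hI : I.IsHomogeneous (homogeneousSubmodule σ K)) {D : ℕ}
    (hlow : ∀ f ∈ I, ∀ d, D < d → f.IsHomogeneous d → f ≠ 0 →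
      ∃ p ∈ I, p ≠ 0 ∧ m.degree p ≤ m.degree f ∧ (m.degree p).degree < d)
    {g : MvPolynomial σ K} (hg : g ∈ G) : g.totalDegree ≤ D := by
  by_contra! hD
  set d := g.totalDegree
  set f := homogeneousComponent d g
  have hf : f.IsHomogeneous d := homogeneousComponent_isHomogeneous d g
  have hsupp : f.support = {s ∈ g.support | s.degree = d} := support_homogeneousComponent d g
  have hf0 : f ≠ 0 := by
    have hg0 : g ≠ 0 := fun h0 => hG.zero_not_mem (h0 ▸ hg)
    obtain ⟨s, hs, hsd⟩ :=
      Finset.exists_mem_eq_sup g.support (support_nonempty.mpr hg0) Finsupp.degree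
    rw [← support_nonempty, hsupp]
    exact ⟨s, Finset.mem_filter.mpr ⟨hs, hsd.symm⟩⟩
  have hfg : m.degree f ∈ g.support := by
    have := m.degree_mem_support hf0
    rw [hsupp] at this
    exact (Finset.mem_filter.mp this).1
  obtain ⟨p, hpI, hp0, hpf, hpd⟩ := hlow f (homogeneousComponent_mem_of_mem hI (hG.subset hg) d)
    d hD hf hf0
  obtain ⟨g', hg', hg'p⟩ := hG.isGB p hpI hp0
  rw [lm_eq_degree, lm_eq_degree] at hg'p
  have hg'f : m.degree g' ≤ m.degree f := hg'p.trans hpf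
  have hg'd : (m.degree g').degree < d := (Finsupp.degree_mono hg'p).trans_lt hpd
  rcases eq_or_ne g g' with rfl | hne
  · have hgf : m.degree g = m.degree f :=
      m.toSyn.injective (le_antisymm (m.toSyn_monotone hg'f) (m.le_degree hfg))
    rw [hgf, isHomogeneous_iff_degree_eq.mp hf _ (m.degree_mem_support hf0)] at hg'd
    exact lt_irrefl _ hg'd
  · exact hG.reduced g hg g' hg' hne _ hfg hg'f

end ReducedGroebnerBasis

section Homogenization

variable {n : ℕ}

@[simp] theorem restr_apply (a : Fin (n + 1) →₀ ℕ) (i : Fin n) :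
    restr a i = a i.castSucc := by
  simp [restr]

@[simp] theorem extX_castSucc (a : Fin n →₀ ℕ) (i : Fin n) : extX a i.castSucc = a i :=
  Finsupp.embDomain_apply_self _ a i

@[simp] theorem extX_last (a : Fin n →₀ ℕ) : extX a (Fin.last n) = 0 :=
  Finsupp.embDomain_of_notMem_range _ _ _
    (by rintro ⟨i, hi⟩; exact (Fin.castSucc_lt_last i).ne hi)

@[simp] theorem restr_extX (a : Fin n →₀ ℕ) : restr (extX a) = a := by
  ext i; simp

theorem extX_restr_add_single_last (a : Fin (n + 1) →₀ ℕ) :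
    extX (restr a) + Finsupp.single (Fin.last n) (a (Fin.last n)) = a := by
  ext j
  induction j using Fin.lastCases <;> simp

theorem extX_restr {a : Fin (n + 1) →₀ ℕ} (ha : a (Fin.last n) = 0) : extX (restr a) = a := by
  simpa [ha] using extX_restr_add_single_last a

theorem degree_extX (a : Fin n →₀ ℕ) : (extX a).degree = a.degree := by
  rw [extX, Finsupp.degree_apply, Finsupp.support_embDomain, Finset.sum_map, Finsupp.degree_apply]
  exact Finset.sum_congr rfl fun i _ => Finsupp.embDomain_apply_self _ _ _

theorem degree_eq_degree_restr_add (a : Fin (n + 1) →₀ ℕ) :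
    a.degree = (restr a).degree + a (Fin.last n) := by
  conv_lhs => rw [← extX_restr_add_single_last a]
  rw [map_add, degree_extX, Finsupp.degree_single]

theorem extX_mono {a b : Fin n →₀ ℕ} (hab : a ≤ b) : extX a ≤ extX b := by
  intro j
  induction j using Fin.lastCases with
  | last => simp
  | cast i => simpa using hab i

theorem IsHomogenizationOrder.toSyn_lt {m' : MonomialOrder (Fin (n + 1))}
    {m₀ : MonomialOrder (Fin n)} (hm' : IsHomogenizationOrder m' m₀) (hm₀ : MonIsGraded m₀)
    {a b : Fin (n + 1) →₀ ℕ} (hab : a.degree = b.degree) (ha : a (Fin.last n) = 0)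
    (hb : b (Fin.last n) ≠ 0) : m'.toSyn b < m'.toSyn a := by
  refine (hm' b a).mpr (Or.inr ⟨hab.symm, hm₀ _ _ ?_⟩)
  have := degree_eq_degree_restr_add a
  have := degree_eq_degree_restr_add b
  omega

variable (K n) in
noncomputable def topPartHom : MvPolynomial (Fin (n + 1)) K →ₐ[K] MvPolynomial (Fin n) K :=
  aeval (Fin.lastCases 0 X)

theorem topPartHom_apply (F : MvPolynomial (Fin (n + 1)) K) : topPartHom K n F = topPartR F :=
  rfl

theorem topPartR_rename_castSucc (p : MvPolynomial (Fin n) K) :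
    topPartR (rename Fin.castSucc p) = p := by
  rw [topPartR, aeval_rename]
  convert aeval_X_left_apply p
  funext i
  simp

theorem topPartHom_surjective : Function.Surjective (topPartHom K n) :=
  fun p => ⟨rename Fin.castSucc p, topPartR_rename_castSucc p⟩

theorem topPartR_monomial (u : Fin (n + 1) →₀ ℕ) (c : K) :
    topPartR (monomial u c) = if u (Fin.last n) = 0 then monomial (restr u) c else 0 := by
  split_ifs with hu
  · rw [← topPartR_rename_castSucc (monomial (restr u) c), rename_monomial,
      ← Fin.coe_castSuccEmb, ← Finsupp.embDomain_eq_mapDomain, ← extX, extX_restr hu]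
  · rw [topPartR, aeval_monomial, Finsupp.prod]
    refine mul_eq_zero_of_right _ (Finset.prod_eq_zero (Finsupp.mem_support_iff.mpr hu) ?_)
    simp [zero_pow hu]

theorem coeff_topPartR (F : MvPolynomial (Fin (n + 1)) K) (v : Fin n →₀ ℕ) :
    coeff v (topPartR F) = coeff (extX v) F := by
  induction F using MvPolynomial.induction_on' with
  | monomial u c =>
    rw [topPartR_monomial, coeff_monomial]
    by_cases hu : u (Fin.last n) = 0
    · have huv : u = extX v ↔ restr u = v :=
        ⟨fun h => by rw [h, restr_extX], fun h => by rw [← h, extX_restr hu]⟩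
      rw [if_pos hu, coeff_monomial]
      exact if_congr huv.symm rfl rfl
    · rw [if_neg hu, coeff_zero, if_neg]
      rintro rfl
      exact hu (extX_last v)
  | add p q hp hq => simp only [← topPartHom_apply, map_add, coeff_add, hp, hq] at *

theorem _root_.MvPolynomial.IsHomogeneous.topPartR {F : MvPolynomial (Fin (n + 1)) K} {d : ℕ}
    (hF : F.IsHomogeneous d) : (topPartR F).IsHomogeneous d := by
  rw [isHomogeneous_iff_degree_eq] at hF ⊢
  intro v hv
  rw [mem_support_iff, coeff_topPartR, ← mem_support_iff] at hv
  rw [← degree_extX, hF _ hv]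

theorem topPartR_homogeneousComponent (F : MvPolynomial (Fin (n + 1)) K) (e : ℕ) :
    topPartR (homogeneousComponent e F) = homogeneousComponent e (topPartR F) := by
  ext v
  simp only [coeff_topPartR, coeff_homogeneousComponent, degree_extX]

theorem last_ne_zero_of_topPartR_eq_zero {F : MvPolynomial (Fin (n + 1)) K}
    (hF : topPartR F = 0) : ∀ s ∈ F.support, s (Fin.last n) ≠ 0 := by
  intro s hs hs0
  rw [mem_support_iff, ← extX_restr hs0, ← coeff_topPartR, hF, coeff_zero] at hs
  exact hs rfl

theorem exists_isHomogeneous_topPartR_eq {I : Ideal (MvPolynomial (Fin (n + 1)) K)}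
    (hI : I.IsHomogeneous (homogeneousSubmodule _ K)) {p : MvPolynomial (Fin n) K} {e : ℕ}
    (hp : p ∈ I.map (topPartHom K n)) (he : p.IsHomogeneous e) :
    ∃ P ∈ I, P.IsHomogeneous e ∧ topPartR P = p := by
  obtain ⟨P, hPI, rfl⟩ := (Ideal.mem_map_iff_of_surjective _ topPartHom_surjective).mp hp
  refine ⟨homogeneousComponent e P, homogeneousComponent_mem_of_mem hI hPI e,
    homogeneousComponent_isHomogeneous e P, ?_⟩
  rw [topPartR_homogeneousComponent, ← topPartHom_apply, homogeneousComponent_eq_self he]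

theorem exists_sub_X_last_mul_mem {I : Ideal (MvPolynomial (Fin (n + 1)) K)}
    (hI : I.IsHomogeneous (homogeneousSubmodule _ K)) {f : MvPolynomial (Fin (n + 1)) K}
    {e : ℕ} (hf : f.IsHomogeneous e) (hfI : topPartR f ∈ I.map (topPartHom K n)) :
    ∃ q : MvPolynomial (Fin (n + 1)) K,
      q.IsHomogeneous (e - 1) ∧ f - X (Fin.last n) * q ∈ I := by
  obtain ⟨P, hPI, hP, hPf⟩ := exists_isHomogeneous_topPartR_eq hI hfI hf.topPartR
  have htop : topPartR (f - P) = 0 := by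
    rw [← topPartHom_apply, map_sub, topPartHom_apply, topPartHom_apply, hPf, sub_self]
  refine ⟨(f - P).divMonomial (Finsupp.single (Fin.last n) 1), ?_, ?_⟩
  · simpa using (hf.sub hP).divMonomial (Finsupp.single (Fin.last n) 1)
  · rw [X_mul_divMonomial_single_eq (last_ne_zero_of_topPartR_eq_zero htop), sub_sub_cancel]
    exact hPI

section HomogenizationOrder

variable {m' : MonomialOrder (Fin (n + 1))} {m₀ : MonomialOrder (Fin n)}

theorem IsHomogenizationOrder.last_ne_zero_of_mem_support (hm' : IsHomogenizationOrder m' m₀)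
    (hm₀ : MonIsGraded m₀) {f : MvPolynomial (Fin (n + 1)) K} {d : ℕ} (hf : f.IsHomogeneous d)
    (hlast : m'.degree f (Fin.last n) ≠ 0) : ∀ s ∈ f.support, s (Fin.last n) ≠ 0 := by
  intro s hs hs0
  have hf0 : f ≠ 0 := by rintro rfl; simp at hs
  have hdeg : s.degree = (m'.degree f).degree := by
    rw [isHomogeneous_iff_degree_eq.mp hf _ hs,
      isHomogeneous_iff_degree_eq.mp hf _ (m'.degree_mem_support hf0)]
  exact (hm'.toSyn_lt hm₀ hdeg hs0 hlast).not_ge (m'.le_degree hs)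

theorem IsHomogenizationOrder.degree_eq_extX (hm' : IsHomogenizationOrder m' m₀)
    (hm₀ : MonIsGraded m₀) {P : MvPolynomial (Fin (n + 1)) K} {e : ℕ} (hP : P.IsHomogeneous e)
    {b : Fin n →₀ ℕ} (htop : topPartR P = monomial b 1) : m'.degree P = extX b := by
  have hb : extX b ∈ P.support := by
    rw [mem_support_iff, ← coeff_topPartR, htop, coeff_monomial, if_pos rfl]
    exact one_ne_zero
  refine m'.toSyn.injective (le_antisymm (m'.degree_le_iff.mpr fun t ht => ?_) (m'.le_degree hb))
  by_cases ht0 : t (Fin.last n) = 0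
  · have hrt : restr t = b := by
      by_contra hne
      rw [mem_support_iff, ← extX_restr ht0, ← coeff_topPartR, htop, coeff_monomial,
        if_neg (Ne.symm hne)] at ht
      exact ht rfl
    rw [← extX_restr ht0, hrt]
  · have hdeg : (extX b).degree = t.degree := by
      rw [isHomogeneous_iff_degree_eq.mp hP _ hb, isHomogeneous_iff_degree_eq.mp hP _ ht]
    exact (hm'.toSyn_lt hm₀ hdeg (extX_last b) ht0).le

end HomogenizationOrder

end Homogenization

section LeadingMonomials

variable {n : ℕ} {I : Ideal (MvPolynomial (Fin (n + 1)) K)}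
  {m' : MonomialOrder (Fin (n + 1))} {m₀ : MonomialOrder (Fin n)}

theorem exists_degree_lt_of_degree_last_ne_zero (hm' : IsHomogenizationOrder m' m₀)
    (hm₀ : MonIsGraded m₀) {d : ℕ}
    (hinj : ∀ q, q.IsHomogeneous (d - 1) → X (Fin.last n) * q ∈ I → q ∈ I)
    {f : MvPolynomial (Fin (n + 1)) K} (hfI : f ∈ I) (hf : f.IsHomogeneous d)
    (hlast : m'.degree f (Fin.last n) ≠ 0) :
    ∃ p ∈ I, p ≠ 0 ∧ m'.degree p ≤ m'.degree f ∧ (m'.degree p).degree < d := by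
  set q := f.divMonomial (Finsupp.single (Fin.last n) 1)
  have hfq : X (Fin.last n) * q = f :=
    X_mul_divMonomial_single_eq (hm'.last_ne_zero_of_mem_support hm₀ hf hlast)
  have hf0 : f ≠ 0 := by rintro rfl; simp at hlast
  have hq0 : q ≠ 0 := by rintro h; rw [h, mul_zero] at hfq; exact hf0 hfq.symm
  have hdeg : m'.degree f = Finsupp.single (Fin.last n) 1 + m'.degree q := by
    rw [← hfq, m'.degree_mul (X_ne_zero _) hq0, m'.degree_X]
  have hq : q.IsHomogeneous (d - 1) := by simpa using hf.divMonomial (Finsupp.single (Fin.last n) 1)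
  refine ⟨q, hinj q hq (hfq ▸ hfI), hq0, hdeg ▸ le_add_self, ?_⟩
  have := isHomogeneous_iff_degree_eq.mp hf _ (m'.degree_mem_support hf0)
  rw [hdeg, map_add, Finsupp.degree_single] at this
  omega

theorem exists_degree_lt_of_degree_last_eq_zero (hm' : IsHomogenizationOrder m' m₀)
    (hm₀ : MonIsGraded m₀) (hI : I.IsHomogeneous (homogeneousSubmodule _ K)) {d : ℕ}
    (hd : d ≠ 0)
    (htop : ∀ p : MvPolynomial (Fin n) K, p.IsHomogeneous (d - 1) →
      p ∈ I.map (topPartHom K n))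
    {f : MvPolynomial (Fin (n + 1)) K} (hf : f.IsHomogeneous d) (hf0 : f ≠ 0)
    (hlast : m'.degree f (Fin.last n) = 0) :
    ∃ p ∈ I, p ≠ 0 ∧ m'.degree p ≤ m'.degree f ∧ (m'.degree p).degree < d := by
  set a := restr (m'.degree f)
  have ha : extX a = m'.degree f := extX_restr hlast
  have hadeg : a.degree = d := by
    rw [← degree_extX, ha, isHomogeneous_iff_degree_eq.mp hf _ (m'.degree_mem_support hf0)]
  obtain ⟨i, hi⟩ : ∃ i, a i ≠ 0 := by
    by_contra! h0
    rw [show a = 0 from Finsupp.ext h0, map_zero] at hadeg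
    exact hd hadeg.symm
  set b := a - Finsupp.single i 1
  have hba : b + Finsupp.single i 1 = a :=
    tsub_add_cancel_of_le (Finsupp.single_le_iff.mpr (Nat.one_le_iff_ne_zero.mpr hi))
  have hb : (monomial b (1 : K)).IsHomogeneous (d - 1) := by
    refine isHomogeneous_monomial _ ?_
    have := congrArg Finsupp.degree hba
    rw [map_add, Finsupp.degree_single] at this
    omega
  obtain ⟨P, hPI, hP, hPb⟩ := exists_isHomogeneous_topPartR_eq hI (htop _ hb) hb
  have hPdeg : m'.degree P = extX b := hm'.degree_eq_extX hm₀ hP hPb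
  refine ⟨P, hPI, ?_, ?_, ?_⟩
  · rintro rfl
    rw [← topPartHom_apply, map_zero, eq_comm, monomial_eq_zero] at hPb
    exact one_ne_zero hPb
  · rw [hPdeg, ← ha]
    exact extX_mono tsub_le_self
  · rw [hPdeg, degree_extX, isHomogeneous_iff_degree_eq.mp hb b (by simp)]
    omega

theorem exists_degree_lt_of_gdegReg_lt (hm' : IsHomogenizationOrder m' m₀)
    (hm₀ : MonIsGraded m₀) (hI : I.IsHomogeneous (homogeneousSubmodule _ K)) {D D' : ℕ}
    (hD : ∀ p : MvPolynomial (Fin n) K, p.IsHomogeneous D → p ∈ I.map (topPartHom K n))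
    (hDD' : D ≤ D') (hHF : ∀ e, D' ≤ e → hilbertFn K I e = hilbertFn K I D')
    {f : MvPolynomial (Fin (n + 1)) K} (hfI : f ∈ I) {d : ℕ} (hd : D' < d)
    (hf : f.IsHomogeneous d) (hf0 : f ≠ 0) :
    ∃ p ∈ I, p ≠ 0 ∧ m'.degree p ≤ m'.degree f ∧ (m'.degree p).degree < d := by
  have htop : ∀ e, D ≤ e → ∀ p : MvPolynomial (Fin n) K, p.IsHomogeneous e →
      p ∈ I.map (topPartHom K n) := fun e he => forall_isHomogeneous_mem_of_le hD he
  by_cases hlast : m'.degree f (Fin.last n) = 0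
  · exact exists_degree_lt_of_degree_last_eq_zero hm' hm₀ hI (by omega) (htop _ (by omega)) hf
      hf0 hlast
  · refine exists_degree_lt_of_degree_last_ne_zero hm' hm₀ (fun q hq hXq => ?_) hfI hf hlast
    have hHF' : hilbertFn K I (d - 1) = hilbertFn K I (d - 1 + 1) := by
      rw [hHF (d - 1) (by omega), hHF (d - 1 + 1) (by omega)]
    refine mem_of_X_mul_mem_of_hilbertFn_eq (Fin.last n) hHF' (fun g hg => ?_) hq hXq
    simpa using exists_sub_X_last_mul_mem hI hg (htop _ (by omega) _ hg.topPartR)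

end LeadingMonomials

end GBPaper

open GBPaper

/-- if `R'/⟨H,y⟩ ≅ R/⟨H^top⟩` is Artinian with `D = d_reg(⟨H^top⟩)`,
the generalized degree of regularity `D'` of `⟨H⟩` is finite, and `D' ≥ D`, then
the reduced Gröbner basis of `⟨H⟩` w.r.t. any homogenized graded monomial ordering
lives in degrees `≤ D'`. -/
theorem stmt6 {K : Type*} [Field K] {n M : ℕ}
    (h : Fin M → MvPolynomial (Fin (n + 1)) K) (dg : Fin M → ℕ)
    (hhom : ∀ i, (h i).IsHomogeneous (dg i))
    (hArt : ∃ d : ℕ, ∀ g : MvPolynomial (Fin n) K, g.IsHomogeneous d →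
      g ∈ Ideal.span (Set.range fun i => topPartR (h i)))
    (hfin : {d₀ : ℕ | ∀ d : ℕ, d₀ ≤ d →
        hilbertFn K (Ideal.span (Set.range h)) d =
          hilbertFn K (Ideal.span (Set.range h)) d₀}.Nonempty)
    (hDD' : degReg K (Ideal.span (Set.range fun i => topPartR (h i))) ≤
      gdegReg K (Ideal.span (Set.range h)))
    (m' : MonomialOrder (Fin (n + 1))) (m₀ : MonomialOrder (Fin n))
    (hm₀ : MonIsGraded m₀) (hm' : IsHomogenizationOrder m' m₀)
    (G : Finset (MvPolynomial (Fin (n + 1)) K))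
    (hG : IsReducedGB m' (Ideal.span (Set.range h)) G) :
    ∀ g ∈ G, g.totalDegree ≤ gdegReg K (Ideal.span (Set.range h)) := by
  have hI := isHomogeneous_span_range hhom
  have htop : Ideal.span (Set.range fun i => topPartR (h i)) =
      (Ideal.span (Set.range h)).map (topPartHom K n) := by
    rw [Ideal.map_span, ← Set.range_comp]
    rfl
  have hD := Nat.sInf_mem hArt
  rw [htop] at hD hDD'
  exact fun g hg => hG.totalDegree_le hI
    (fun f hfI d hd hf hf0 => exists_degree_lt_of_gdegReg_lt hm' hm₀ hI hD hDD'
      (Nat.sInf_mem hfin) hfI hd hf hf0) hg
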